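/- arXiv:1605.00422 — 3 statements merged into one kernel-verified Lean document; each statement's English description precedes it below -/
import Mathlib

section
/- Regularization correctness for a single linear equation: let S be a semiring with transpose, tensor-product semiring T, and readout RO. If v ∈ T is the least solution of y = (1^t ⊗ c) + y ⊙ (a^t ⊗ b) in T (i.e., v = ⊕_{n∈ℕ} (1^t ⊗ c) ⊙ (a^t ⊗ b)^n), then RO(v) is the least solution of x = c + a * x * b in S, namely RO(v) = ⊕_{n∈ℕ} aⁿ * c * bⁿ. -/
/-- An idempotent ω-continuous semiring structure on `S`: addition is
idempotent, and there is a countable-sum operation `ssum` which is the supremum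
(wrt the natural order `a ≤ b ↔ a + b = b`) of the finite partial sums, and
over which multiplication distributes on both sides. -/
structure IdemOmegaSemiring (S : Type*) [Semiring S] where
  /-- addition is idempotent -/
  idem : ∀ a : S, a + a = a
  /-- countable sums -/
  ssum : (ℕ → S) → S
  /-- `ssum f` is an upper bound of the finite partial sums -/
  ssum_ub : ∀ (f : ℕ → S) (n : ℕ), (∑ i ∈ Finset.range n, f i) + ssum f = ssum f
  /-- `ssum f` is the least upper bound of the finite partial sums -/
  ssum_least : ∀ (f : ℕ → S) (b : S),
    (∀ n : ℕ, (∑ i ∈ Finset.range n, f i) + b = b) → ssum f + b = b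
  /-- multiplication distributes over countable sums from the left -/
  mul_ssum : ∀ (c : S) (f : ℕ → S), c * ssum f = ssum fun i => c * f i
  /-- multiplication distributes over countable sums from the right -/
  ssum_mul : ∀ (c : S) (f : ℕ → S), ssum f * c = ssum fun i => f i * c

/-- A transpose operation on a semiring. -/
structure Transpose (S : Type*) [Semiring S] where
  t : S → S
  t_add : ∀ a b : S, t (a + b) = t a + t b
  t_mul : ∀ a b : S, t (a * b) = t b * t a
  t_t : ∀ a : S, t (t a) = a

/-- A tensor-product semiring `T` for a semiring `S` with transpose `tr`:
a semiring together with a tensor map `tp : S × S → T` and a readout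
`ro : T → S`. -/
structure TensorSemiring (S T : Type*) [Semiring S] [Semiring T]
    (tr : Transpose S) where
  tp : S → S → T
  tp_zero_left : ∀ a : S, tp 0 a = 0
  tp_zero_right : ∀ a : S, tp a 0 = 0
  tp_mul : ∀ a b c d : S, tp a b * tp c d = tp (a * c) (b * d)
  tp_add_left : ∀ a b c : S, tp (b + c) a = tp b a + tp c a
  tp_add_right : ∀ a b c : S, tp a (b + c) = tp a b + tp a c
  ro : T → S
  ro_tp : ∀ a b : S, ro (tp a b) = tr.t a * b
  ro_add : ∀ x y : T, ro (x + y) = ro x + ro y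

/-- Regularization correctness for a single linear equation: if
`v = ⊕_{n∈ℕ} (1^t ⊗ c) ⊙ (a^t ⊗ b)^n` is the least solution of
`y = (1^t ⊗ c) + y ⊙ (a^t ⊗ b)` in the tensor-product semiring `T`, then its
readout is the least solution `⊕_{n∈ℕ} aⁿ * c * bⁿ` of `x = c + a * x * b`
in `S`. -/
theorem regularization_correct {S T : Type*} [Semiring S] [Semiring T]
    (ΩS : IdemOmegaSemiring S) (ΩT : IdemOmegaSemiring T)
    (tr : Transpose S) (ten : TensorSemiring S T tr)
    (ro_ssum : ∀ f : ℕ → T, ten.ro (ΩT.ssum f) = ΩS.ssum fun n => ten.ro (f n))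
    (a b c : S)
    (v : T)
    (hv : v = ΩT.ssum fun n => ten.tp (tr.t 1) c * (ten.tp (tr.t a) b) ^ n) :
    ten.ro v = ΩS.ssum fun n => a ^ n * c * b ^ n := by
  subst hv
  rw [ro_ssum]
  congr 1
  funext n
  have key : ∀ m : ℕ, ten.tp (tr.t 1) c * (ten.tp (tr.t a) b) ^ m
      = ten.tp (tr.t 1 * (tr.t a) ^ m) (c * b ^ m) := by
    intro m
    induction m with
    | zero => simp
    | succ k ih =>
        rw [pow_succ, ← mul_assoc, ih, ten.tp_mul, pow_succ, pow_succ, mul_assoc,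
          mul_assoc]
  have tkey : ∀ m : ℕ, tr.t (tr.t 1 * (tr.t a) ^ m) = a ^ m := by
    intro m
    induction m with
    | zero => simpa using tr.t_t 1
    | succ k ih =>
        rw [pow_succ, ← mul_assoc, tr.t_mul, ih, tr.t_t, pow_succ']
  rw [key, ten.ro_tp, tkey, mul_assoc]
end

section
/- In the commutative idempotent ω-continuous semiring, for the single equation x = a*x*x + b (one variable, a,b constants), the least fixed point equals ⊕ over all binary trees of the corresponding yield, and equals the supremum of the Kleene iterates f^n(0) where f(x) = a*x*x + b. -/
/-- Binary derivation trees for the equation `x = a*x*x + b`. -/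
inductive BTree where
  | leaf : BTree
  | node : BTree → BTree → BTree

/-- Yield of a binary tree: leaves yield `b`, an internal node contributes a
factor `a` and multiplies the yields of its subtrees. -/
def BTree.yield {S : Type*} [CommSemiring S] (a b : S) : BTree → S
  | .leaf => b
  | .node l r => a * l.yield a b * r.yield a b

abbrev IdemOmegaSemiring.toIdemCommSemiring {S : Type*} [CommSemiring S]
    (Ω : IdemOmegaSemiring S) : IdemCommSemiring S :=
  { ‹CommSemiring S›, IdemSemiring.ofSemiring Ω.idem with }

namespace IdemOmegaSemiring

variable {S : Type*} [IdemSemiring S] (Ω : IdemOmegaSemiring S)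

theorem le_ssum (f : ℕ → S) (n : ℕ) : f n ≤ Ω.ssum f :=
  calc f n ≤ ∑ i ∈ Finset.range (n + 1), f i := by
        rw [Finset.sum_range_succ]; exact le_add_self
    _ ≤ Ω.ssum f := add_eq_right_iff_le.1 (Ω.ssum_ub f (n + 1))

theorem ssum_le {f : ℕ → S} {x : S} (h : ∀ n, f n ≤ x) : Ω.ssum f ≤ x := by
  refine add_eq_right_iff_le.1 (Ω.ssum_least f x fun n => add_eq_right_iff_le.2 ?_)
  induction n with
  | zero => simp
  | succ n ih => rw [Finset.sum_range_succ]; exact add_le ih (h n)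

theorem le_ssum_comp_of_surjective {α : Type*} (g : α → S) {e : ℕ → α}
    (he : Function.Surjective e) (x : α) : g x ≤ Ω.ssum (g ∘ e) := by
  obtain ⟨n, rfl⟩ := he x
  exact Ω.le_ssum (g ∘ e) n

theorem mul_ssum_mul_ssum (c : S) (f g : ℕ → S) :
    c * Ω.ssum f * Ω.ssum g = Ω.ssum fun i => Ω.ssum fun j => c * f i * g j := by
  rw [Ω.mul_ssum c f, Ω.ssum_mul]
  simp only [Ω.mul_ssum]

end IdemOmegaSemiring

theorem iterate_zero_le_of_map_le {S : Type*} [IdemSemiring S] {f : S → S} (hf : Monotone f)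
    {x : S} (hx : f x ≤ x) (n : ℕ) : f^[n] 0 ≤ x := by
  induction n with
  | zero => exact zero_le
  | succ n ih => rw [Function.iterate_succ_apply']; exact (hf ih).trans hx

namespace BTree

def height : BTree → ℕ
  | .leaf => 0
  | .node l r => max l.height r.height + 1

variable {S : Type*} [IdemCommSemiring S] {a b : S}

theorem yield_le_of_map_le {x : S} (hx : a * x * x + b ≤ x) (t : BTree) : t.yield a b ≤ x := by
  induction t with
  | leaf => exact le_trans le_add_self hx
  | node l r ihl ihr =>
    calc a * l.yield a b * r.yield a b ≤ a * x * x := by gcongr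
      _ ≤ x := le_trans le_self_add hx

theorem yield_le_iterate (t : BTree) {n : ℕ} (hn : t.height < n) :
    t.yield a b ≤ (fun x => a * x * x + b)^[n] 0 := by
  induction t generalizing n with
  | leaf =>
    obtain ⟨m, rfl⟩ := Nat.exists_eq_add_one_of_ne_zero hn.ne'
    rw [Function.iterate_succ_apply']
    exact le_add_self
  | node l r ihl ihr =>
    obtain ⟨m, rfl⟩ := Nat.exists_eq_add_one_of_ne_zero (Nat.ne_zero_of_lt hn)
    have hm : max l.height r.height < m := by simpa [height] using hn
    rw [Function.iterate_succ_apply']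
    calc a * l.yield a b * r.yield a b
        ≤ a * _ * _ := by gcongr <;> [exact ihl (by omega); exact ihr (by omega)]
      _ ≤ _ := le_self_add

end BTree

/-- In a commutative idempotent ω-continuous semiring, for the single equation
`x = a*x*x + b`, the countable sum `L` of the yields of all binary trees is the
least fixed point of `f x = a*x*x + b`, and it is the supremum of the Kleene
iterates `f^[n] 0` (where `x ≤ y` abbreviates `x + y = y`). -/
theorem lfp_eq_tree_sum_eq_kleene_sup {S : Type*} [CommSemiring S]
    (Ω : IdemOmegaSemiring S) (a b : S)
    (e : ℕ → BTree) (he : Function.Surjective e) :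
    let f : S → S := fun x => a * x * x + b
    let L : S := Ω.ssum fun n => (e n).yield a b
    f L = L ∧ (∀ x : S, f x = x → L + x = x) ∧
    (∀ n : ℕ, f^[n] 0 + L = L) ∧
    (∀ x : S, (∀ n : ℕ, f^[n] 0 + x = x) → L + x = x) := by
  intro f L
  let _ := Ω.toIdemCommSemiring
  simp only [add_eq_right_iff_le]
  have hf : Monotone f := fun x y h => by dsimp only [f]; gcongr
  have hLe : ∀ {x}, f x ≤ x → L ≤ x := fun hx => Ω.ssum_le fun n => (e n).yield_le_of_map_le hx
  have hyield (t : BTree) : t.yield a b ≤ L := Ω.le_ssum_comp_of_surjective _ he t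
  have hfL : f L ≤ L := by
    refine add_le ?_ ?_
    · rw [Ω.mul_ssum_mul_ssum]
      exact Ω.ssum_le fun i => Ω.ssum_le fun j => hyield (.node (e i) (e j))
    · exact hyield .leaf
  have hfix : f L = L := le_antisymm hfL (hLe (hf hfL))
  refine ⟨hfix, fun x hx => hLe hx.le, iterate_zero_le_of_map_le hf hfL, fun x hx => ?_⟩
  exact Ω.ssum_le fun n => ((e n).yield_le_iterate (Nat.lt_succ_self _)).trans (hx _)
end

section
/- Over the semiring (ℕ ∪ {∞}, +, ·, 0, 1), for the system x = y·y, y = z, z = 2 with linear completion C(f)_x = x + y·y + z·y + y·z, C(f)_y = y + z, C(f)_z = z, the first Munchausen approximant M¹ = eval_{M⁰}(M⁰) evaluated at the constant vector (0,0,2) yields (12,4,2), which is strictly larger than the least fixed point (4,2,2) of the system; in particular, Munchausen iteration can exceed the least fixed point in non-idempotent semirings. -/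
open Matrix in
/-- The right-hand side of the system `x = y·y, y = z, z = 2` over `ℕ∞`. -/
def sysRHS : (Fin 3 → ℕ∞) → (Fin 3 → ℕ∞) :=
  fun v => ![v 1 * v 1, v 2, 2]

open Matrix in
/-- The linear completion `M⁰` of the functional part of the system:
`C(f)_x = x + y·y + z·y + y·z`, `C(f)_y = y + z`, `C(f)_z = z`. -/
def M0 : (Fin 3 → ℕ∞) → (Fin 3 → ℕ∞) :=
  fun v => ![v 0 + v 1 * v 1 + v 2 * v 1 + v 1 * v 2, v 1 + v 2, v 2]

/-- The first Munchausen approximant `M¹ = eval_{M⁰}(M⁰)`. -/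
def M1 : (Fin 3 → ℕ∞) → (Fin 3 → ℕ∞) := fun v => M0 (M0 v)

open Matrix in
/-- Over the non-idempotent semiring `ℕ ∪ {∞}`, the first Munchausen
approximant evaluated at the constant vector `(0,0,2)` gives `(12,4,2)`, which
is strictly larger than the least fixed point `(4,2,2)` of the system:
Munchausen iteration can exceed the least fixed point in non-idempotent
semirings. -/
theorem munchausen_exceeds_lfp :
    M1 ![0, 0, 2] = ![12, 4, 2] ∧
    sysRHS ![4, 2, 2] = ![4, 2, 2] ∧
    (∀ v : Fin 3 → ℕ∞, sysRHS v = v → ∀ i, (![4, 2, 2] : Fin 3 → ℕ∞) i ≤ v i) ∧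
    (∀ i, (![4, 2, 2] : Fin 3 → ℕ∞) i ≤ M1 ![0, 0, 2] i) ∧
    (∃ i, (![4, 2, 2] : Fin 3 → ℕ∞) i < M1 ![0, 0, 2] i) := by
  have hM : M1 ![0, 0, 2] = ![12, 4, 2] := by
    funext i
    fin_cases i <;> simp [M1, M0] <;> norm_num
  refine ⟨hM, ?_, ?_, ?_, ?_⟩
  · funext i
    fin_cases i <;> simp [sysRHS] <;> norm_num
  · intro v hv i
    have h2 : v 2 = 2 := by
      have := congrFun hv 2; simpa [sysRHS] using this.symm
    have h1 : v 1 = 2 := by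
      have := congrFun hv 1; simp [sysRHS, h2] at this; exact this.symm
    have h0 : v 0 = 4 := by
      have := congrFun hv 0; simp [sysRHS, h1] at this
      rw [this.symm]; norm_num
    fin_cases i <;> simp [h0, h1, h2]
  · intro i
    rw [hM]
    fin_cases i <;> norm_num
  · exact ⟨0, by rw [hM]; norm_num⟩
end
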